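/- arXiv:1902.06045 — 6 statements merged into one kernel-verified Lean document; each statement's English description precedes it below -/
import Mathlib

section
/- Let Θ : ℝ⁸ → ℝ be smooth, set ω_{ik} = Θ_{x^i y^k} − Θ_{x^k y^i}, let λ ∈ ℝ and D_m = ∂/∂y^m − λ ∂/∂x^m, and define A^{lm} = Σ_{i,k} ε^{iklm} ω_{ik}. Then the vector fields A^{lm} D_m are divergence-free, i.e. Σ_m D_m A^{lm} = 0 for each fixed l = 1,…,4; consequently, for every smooth ψ : ℝ⁸ → ℝ, the full compatibility identity Σ_{l} D_l ( Σ_{i,k,m} ε^{iklm} ω_{ik} D_m ψ ) = 0 holds at every point. -/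
noncomputable section

/-- Partial derivative of `f : ℝⁿ → ℝ` in the `i`-th coordinate direction. -/
def pd {n : ℕ} (i : Fin n) (f : (Fin n → ℝ) → ℝ) : (Fin n → ℝ) → ℝ :=
  fun p => fderiv ℝ f p (Pi.single i 1)

/-- `∂/∂x^i` on functions of `(x¹,…,x⁴,y¹,…,y⁴) ∈ ℝ⁸`. -/
def px (i : Fin 4) (f : (Fin 8 → ℝ) → ℝ) : (Fin 8 → ℝ) → ℝ :=
  pd ⟨i.val, by omega⟩ f

/-- `∂/∂y^i` on functions of `(x¹,…,x⁴,y¹,…,y⁴) ∈ ℝ⁸`. -/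
def py (i : Fin 4) (f : (Fin 8 → ℝ) → ℝ) : (Fin 8 → ℝ) → ℝ :=
  pd ⟨i.val + 4, by omega⟩ f

/-- The operator `D_m = ∂/∂y^m − λ ∂/∂x^m`. -/
def Dop (lam : ℝ) (m : Fin 4) (f : (Fin 8 → ℝ) → ℝ) : (Fin 8 → ℝ) → ℝ :=
  fun p => py m f p - lam * px m f p

/-- Levi-Civita symbol on indices `1,…,4`. -/
def eps4 (i k l m : Fin 4) : ℝ :=
  Matrix.det (Matrix.of fun r c : Fin 4 => if (![i, k, l, m]) r = c then (1 : ℝ) else 0)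

/-- `ω_{ik} = Θ_{x^i y^k} − Θ_{x^k y^i}`. -/
def omg (Θ : (Fin 8 → ℝ) → ℝ) (i k : Fin 4) : (Fin 8 → ℝ) → ℝ :=
  fun p => px i (py k Θ) p - px k (py i Θ) p

/-- `A^{lm} = Σ_{i,k} ε^{iklm} ω_{ik}`. -/
def Amat (Θ : (Fin 8 → ℝ) → ℝ) (l m : Fin 4) : (Fin 8 → ℝ) → ℝ :=
  fun p => ∑ i, ∑ k, eps4 i k l m * omg Θ i k p

/-! All of `∂/∂x^i`, `∂/∂y^i` and `D_m` are directional derivatives, and directional derivatives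
commute on smooth functions. Expanding `D_m ω_{ik}` gives four third derivatives of `Θ`; in each, two
of the indices `i, k, m` label directions of the same family (`y_m, y_k` or `x_m, x_i`, up to
renaming), so it is symmetric in a pair of indices in which `ε` is antisymmetric, and its contraction
with `ε` vanishes. For the second identity, the Leibniz rule splits `D_l (A^{lm} D_m ψ)` into
`(D_l A^{lm}) D_m ψ`, which vanishes after summing over `l` by the first identity and the
antisymmetry of `A`, and `A^{lm} D_l D_m ψ`, an antisymmetric tensor contracted with a symmetric
one. -/

open Finset
open scoped ContDiff

theorem sum_sum_mul_eq_zero_of_antisymm {ι R : Type*} [Fintype ι] [NonUnitalNonAssocRing R]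
    [IsAddTorsionFree R] {c g : ι → ι → R} (hc : ∀ a b, c b a = -c a b)
    (hg : ∀ a b, g b a = g a b) : ∑ a, ∑ b, c a b * g a b = 0 := by
  refine self_eq_neg.mp ?_
  calc ∑ a, ∑ b, c a b * g a b = ∑ b, ∑ a, c a b * g a b := sum_comm
    _ = ∑ b, ∑ a, -(c b a * g b a) :=
      sum_congr rfl fun b _ => sum_congr rfl fun a _ => by rw [hc b a, hg b a, neg_mul]
    _ = -∑ a, ∑ b, c a b * g a b := by simp only [sum_neg_distrib]

section DirDeriv

variable {E : Type*} [NormedAddCommGroup E] [NormedSpace ℝ E]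

def dirDeriv (v : E) (f : E → ℝ) : E → ℝ := fun p => fderiv ℝ f p v

variable {f g : E → ℝ} {p : E}

theorem contDiff_dirDeriv (hf : ContDiff ℝ ∞ f) (v : E) : ContDiff ℝ ∞ (dirDeriv v f) :=
  (hf.fderiv_right (m := ∞) le_rfl).clm_apply contDiff_const

theorem dirDeriv_comm (hf : ContDiff ℝ ∞ f) (v w : E) :
    dirDeriv v (dirDeriv w f) = dirDeriv w (dirDeriv v f) := by
  funext p
  have hdf : DifferentiableAt ℝ (fderiv ℝ f) p :=
    ((hf.fderiv_right (m := ∞) le_rfl).differentiable (by simp)).differentiableAt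
  have second : ∀ a b, dirDeriv a (dirDeriv b f) p = fderiv ℝ (fderiv ℝ f) p a b := by
    intro a b
    show fderiv ℝ (fun q => fderiv ℝ f q b) p a = _
    simp [fderiv_clm_apply hdf (differentiableAt_const b)]
  rw [second, second]
  exact hf.contDiffAt.isSymmSndFDerivAt (by simpa using ENat.LEInfty.out) v w

theorem dirDeriv_dirDeriv_dirDeriv_swap (hf : ContDiff ℝ ∞ f) (u v w : E) :
    dirDeriv u (dirDeriv v (dirDeriv w f)) = dirDeriv w (dirDeriv v (dirDeriv u f)) := by
  rw [dirDeriv_comm (contDiff_dirDeriv hf w) u v, dirDeriv_comm hf u w,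
    dirDeriv_comm (contDiff_dirDeriv hf u) v w]

theorem dirDeriv_sub_left (v w : E) (f : E → ℝ) (p : E) :
    dirDeriv (v - w) f p = dirDeriv v f p - dirDeriv w f p :=
  map_sub _ v w

theorem dirDeriv_smul_left (c : ℝ) (v : E) (f : E → ℝ) (p : E) :
    dirDeriv (c • v) f p = c * dirDeriv v f p :=
  map_smul _ c v

theorem dirDeriv_neg (v : E) (f : E → ℝ) : dirDeriv v (-f) = -dirDeriv v f := by
  funext p; simp [dirDeriv, fderiv_neg]

theorem dirDeriv_sub (hf : DifferentiableAt ℝ f p) (hg : DifferentiableAt ℝ g p) (v : E) :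
    dirDeriv v (fun q => f q - g q) p = dirDeriv v f p - dirDeriv v g p := by
  simp [dirDeriv, fderiv_fun_sub hf hg]

theorem dirDeriv_const_mul (hf : DifferentiableAt ℝ f p) (c : ℝ) (v : E) :
    dirDeriv v (fun q => c * f q) p = c * dirDeriv v f p := by
  simp [dirDeriv, fderiv_const_mul hf]

theorem dirDeriv_mul (hf : DifferentiableAt ℝ f p) (hg : DifferentiableAt ℝ g p) (v : E) :
    dirDeriv v (fun q => f q * g q) p = dirDeriv v f p * g p + f p * dirDeriv v g p := by
  simp only [dirDeriv, fderiv_fun_mul hf hg, add_apply, smul_apply, smul_eq_mul]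
  ring

theorem dirDeriv_sum {ι : Type*} {s : Finset ι} {F : ι → E → ℝ}
    (hF : ∀ a ∈ s, DifferentiableAt ℝ (F a) p) (v : E) :
    dirDeriv v (fun q => ∑ a ∈ s, F a q) p = ∑ a ∈ s, dirDeriv v (F a) p := by
  simp [dirDeriv, fderiv_fun_sum hF]

theorem sum_dirDeriv_sum_mul_dirDeriv_eq_zero {ι : Type*} [Fintype ι] (d : ι → E)
    {A : ι → ι → E → ℝ} {ψ : E → ℝ}
    (hA : ∀ l m, ContDiff ℝ ∞ (A l m)) (hA_anti : ∀ l m, A m l = -A l m)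
    (hA_div : ∀ l p, ∑ m, dirDeriv (d m) (A l m) p = 0) (hψ : ContDiff ℝ ∞ ψ) (p : E) :
    ∑ l, dirDeriv (d l) (fun q => ∑ m, A l m q * dirDeriv (d m) ψ q) p = 0 := by
  have hA_diff : ∀ l m, DifferentiableAt ℝ (A l m) p :=
    fun l m => ((hA l m).differentiable (by simp)).differentiableAt
  have hψ_diff : ∀ m, DifferentiableAt ℝ (dirDeriv (d m) ψ) p :=
    fun m => ((contDiff_dirDeriv hψ (d m)).differentiable (by simp)).differentiableAt
  have hA_div_swap : ∀ m, ∑ l, dirDeriv (d l) (A l m) p = 0 := fun m => by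
    simp only [hA_anti m, dirDeriv_neg, Pi.neg_apply, sum_neg_distrib, hA_div, neg_zero]
  calc ∑ l, dirDeriv (d l) (fun q => ∑ m, A l m q * dirDeriv (d m) ψ q) p
      = ∑ l, ∑ m, (dirDeriv (d l) (A l m) p * dirDeriv (d m) ψ p
          + A l m p * dirDeriv (d l) (dirDeriv (d m) ψ) p) := by
        refine sum_congr rfl fun l _ => ?_
        rw [dirDeriv_sum (F := fun m q => A l m q * dirDeriv (d m) ψ q)
          fun m _ => (hA_diff l m).mul (hψ_diff m)]
        exact sum_congr rfl fun m _ => dirDeriv_mul (hA_diff l m) (hψ_diff m) _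
    _ = ∑ m, (∑ l, dirDeriv (d l) (A l m) p) * dirDeriv (d m) ψ p
          + ∑ l, ∑ m, A l m p * dirDeriv (d l) (dirDeriv (d m) ψ) p := by
        simp only [sum_add_distrib, sum_mul]
        rw [sum_comm]
    _ = 0 := by
        rw [sum_sum_mul_eq_zero_of_antisymm (fun l m => congrFun (hA_anti l m) p)
          (fun l m => congrFun (dirDeriv_comm hψ (d m) (d l)) p)]
        simp [hA_div_swap]

end DirDeriv

theorem eps4_of_comp_swap {i k l m i' k' l' m' a b : Fin 4} (hab : a ≠ b)
    (h : ![i', k', l', m'] = ![i, k, l, m] ∘ Equiv.swap a b) :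
    eps4 i' k' l' m' = -eps4 i k l m := by
  unfold eps4
  rw [h]
  refine (Matrix.det_permute (Equiv.swap a b)
    (Matrix.of fun r c : Fin 4 => if ![i, k, l, m] r = c then (1 : ℝ) else 0)).trans ?_
  simp [Equiv.Perm.sign_swap hab]

theorem eps4_swap_ik (i k l m : Fin 4) : eps4 k i l m = -eps4 i k l m :=
  eps4_of_comp_swap (a := 0) (b := 1) (by decide) (by funext r; fin_cases r <;> rfl)

theorem eps4_swap_im (i k l m : Fin 4) : eps4 m k l i = -eps4 i k l m :=
  eps4_of_comp_swap (a := 0) (b := 3) (by decide) (by funext r; fin_cases r <;> rfl)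

theorem eps4_swap_km (i k l m : Fin 4) : eps4 i m l k = -eps4 i k l m :=
  eps4_of_comp_swap (a := 1) (b := 3) (by decide) (by funext r; fin_cases r <;> rfl)

theorem eps4_swap_lm (i k l m : Fin 4) : eps4 i k m l = -eps4 i k l m :=
  eps4_of_comp_swap (a := 2) (b := 3) (by decide) (by funext r; fin_cases r <;> rfl)

section Coordinates

variable {Θ : (Fin 8 → ℝ) → ℝ}

def xDir (i : Fin 4) : Fin 8 → ℝ := Pi.single ⟨i, by omega⟩ 1

def yDir (i : Fin 4) : Fin 8 → ℝ := Pi.single ⟨i + 4, by omega⟩ 1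

theorem Dop_apply (lam : ℝ) (m : Fin 4) (f : (Fin 8 → ℝ) → ℝ) (p : Fin 8 → ℝ) :
    Dop lam m f p = dirDeriv (yDir m) f p - lam * dirDeriv (xDir m) f p :=
  rfl

theorem Dop_eq_dirDeriv (lam : ℝ) (m : Fin 4) (f : (Fin 8 → ℝ) → ℝ) :
    Dop lam m f = dirDeriv (yDir m - lam • xDir m) f := by
  funext p
  rw [Dop_apply, dirDeriv_sub_left, dirDeriv_smul_left]

theorem omg_eq (Θ : (Fin 8 → ℝ) → ℝ) (i k : Fin 4) :
    omg Θ i k = fun p => dirDeriv (xDir i) (dirDeriv (yDir k) Θ) p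
      - dirDeriv (xDir k) (dirDeriv (yDir i) Θ) p :=
  rfl

theorem contDiff_omg (hΘ : ContDiff ℝ ∞ Θ) (i k : Fin 4) : ContDiff ℝ ∞ (omg Θ i k) := by
  rw [omg_eq]
  exact (contDiff_dirDeriv (contDiff_dirDeriv hΘ _) _).sub
    (contDiff_dirDeriv (contDiff_dirDeriv hΘ _) _)

theorem contDiff_Amat (hΘ : ContDiff ℝ ∞ Θ) (l m : Fin 4) : ContDiff ℝ ∞ (Amat Θ l m) :=
  ContDiff.sum fun i _ => ContDiff.sum fun k _ => contDiff_const.mul (contDiff_omg hΘ i k)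

theorem Dop_Amat (hΘ : ContDiff ℝ ∞ Θ) (lam : ℝ) (l m : Fin 4) (p : Fin 8 → ℝ) :
    Dop lam m (Amat Θ l m) p = ∑ i, ∑ k, eps4 i k l m * Dop lam m (omg Θ i k) p := by
  have hω : ∀ i k, Differentiable ℝ (omg Θ i k) :=
    fun i k => (contDiff_omg hΘ i k).differentiable (by simp)
  unfold Amat
  rw [Dop_eq_dirDeriv, dirDeriv_sum fun i _ => by fun_prop]
  refine sum_congr rfl fun i _ => ?_
  rw [dirDeriv_sum fun k _ => by fun_prop]
  exact sum_congr rfl fun k _ => by rw [dirDeriv_const_mul (hω i k p), Dop_eq_dirDeriv]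

theorem sum_eps4_mul_Dop_dirDeriv_eq_zero (hΘ : ContDiff ℝ ∞ Θ) (lam : ℝ) (l : Fin 4)
    (p : Fin 8 → ℝ) :
    ∑ i, ∑ k, ∑ m, eps4 i k l m * Dop lam m (dirDeriv (xDir i) (dirDeriv (yDir k) Θ)) p = 0 := by
  have hy : ∑ i, ∑ k, ∑ m,
      eps4 i k l m * dirDeriv (yDir m) (dirDeriv (xDir i) (dirDeriv (yDir k) Θ)) p = 0 :=
    sum_eq_zero fun i _ => sum_sum_mul_eq_zero_of_antisymm (fun k m => eps4_swap_km i k l m)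
      (fun k m => congrFun (dirDeriv_dirDeriv_dirDeriv_swap hΘ _ _ _) p)
  have hx : ∑ i, ∑ k, ∑ m,
      eps4 i k l m * dirDeriv (xDir m) (dirDeriv (xDir i) (dirDeriv (yDir k) Θ)) p = 0 := by
    rw [sum_comm]
    exact sum_eq_zero fun k _ => sum_sum_mul_eq_zero_of_antisymm
      (fun i m => eps4_swap_im i k l m)
      (fun i m => congrFun (dirDeriv_comm (contDiff_dirDeriv hΘ _) _ _) p)
  simp only [Dop_apply, mul_sub, sum_sub_distrib, mul_left_comm (eps4 _ _ _ _) lam, ← mul_sum,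
    hy, hx, mul_zero, sub_zero]

theorem sum_Dop_Amat_eq_zero (hΘ : ContDiff ℝ ∞ Θ) (lam : ℝ) (l : Fin 4) (p : Fin 8 → ℝ) :
    ∑ m, Dop lam m (Amat Θ l m) p = 0 := by
  set Φ : Fin 4 → Fin 4 → Fin 4 → ℝ :=
    fun i k m => Dop lam m (dirDeriv (xDir i) (dirDeriv (yDir k) Θ)) p with hΦ
  have hΦ_diff : ∀ i k, DifferentiableAt ℝ (dirDeriv (xDir i) (dirDeriv (yDir k) Θ)) p :=
    fun i k => ((contDiff_dirDeriv (contDiff_dirDeriv hΘ _) _).differentiable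
      (by simp)).differentiableAt
  have hω : ∀ i k m, Dop lam m (omg Θ i k) p = Φ i k m - Φ k i m := fun i k m => by
    rw [omg_eq, Dop_eq_dirDeriv, dirDeriv_sub (hΦ_diff i k) (hΦ_diff k i)]
    simp only [hΦ, Dop_eq_dirDeriv]
  have hΦ_zero : ∑ i, ∑ k, ∑ m, eps4 i k l m * Φ i k m = 0 :=
    sum_eps4_mul_Dop_dirDeriv_eq_zero hΘ lam l p
  have hΦ_swap_zero : ∑ i, ∑ k, ∑ m, eps4 i k l m * Φ k i m = 0 :=
    calc ∑ i, ∑ k, ∑ m, eps4 i k l m * Φ k i m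
        = ∑ k, ∑ i, ∑ m, -(eps4 k i l m * Φ k i m) := by
          rw [sum_comm]
          exact sum_congr rfl fun k _ => sum_congr rfl fun i _ => sum_congr rfl fun m _ => by
            rw [eps4_swap_ik k i l m, neg_mul]
      _ = 0 := by simp only [sum_neg_distrib, hΦ_zero, neg_zero]
  calc ∑ m, Dop lam m (Amat Θ l m) p
      = ∑ m, ∑ i, ∑ k, eps4 i k l m * (Φ i k m - Φ k i m) := by simp only [Dop_Amat hΘ, hω]
    _ = ∑ i, ∑ k, ∑ m, eps4 i k l m * (Φ i k m - Φ k i m) := sum_comm_cycle.symm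
    _ = 0 := by simp only [mul_sub, sum_sub_distrib, hΦ_zero, hΦ_swap_zero, sub_zero]

theorem Amat_swap (l m : Fin 4) : Amat Θ m l = -Amat Θ l m := by
  funext q
  simp only [Amat, Pi.neg_apply, eps4_swap_lm _ _ l m, neg_mul, sum_neg_distrib]

end Coordinates

/-- the vector fields `A^{lm} D_m` are divergence free, `Σ_m D_m A^{lm} = 0`, and
consequently `Σ_l D_l ( Σ_{i,k,m} ε^{iklm} ω_{ik} D_m ψ ) = 0` at every point
for every smooth `ψ`. -/
theorem stmt2 (Θ : (Fin 8 → ℝ) → ℝ) (hΘ : ContDiff ℝ (⊤ : ℕ∞) Θ) (lam : ℝ) :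
    (∀ l : Fin 4, ∀ p : Fin 8 → ℝ, ∑ m, Dop lam m (Amat Θ l m) p = 0) ∧
    (∀ ψ : (Fin 8 → ℝ) → ℝ, ContDiff ℝ (⊤ : ℕ∞) ψ →
      ∀ p : Fin 8 → ℝ,
        ∑ l, Dop lam l
            (fun q => ∑ i, ∑ k, ∑ m, eps4 i k l m * omg Θ i k q * Dop lam m ψ q) p = 0) := by
  refine ⟨sum_Dop_Amat_eq_zero hΘ lam, fun ψ hψ p => ?_⟩
  have h_inner : ∀ l q, ∑ i, ∑ k, ∑ m, eps4 i k l m * omg Θ i k q * Dop lam m ψ q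
      = ∑ m, Amat Θ l m q * Dop lam m ψ q := fun l q => by
    simp only [Amat, sum_mul]
    exact sum_comm_cycle
  have h_div := sum_Dop_Amat_eq_zero hΘ lam
  simp only [h_inner]
  simp only [Dop_eq_dirDeriv] at h_div ⊢
  exact sum_dirDeriv_sum_mul_dirDeriv_eq_zero _ (contDiff_Amat hΘ) Amat_swap h_div hψ p
end
end

section
/- (Scaled Pfaffian adjugate identity.) Let n ≥ 1 and let ω be a skew-symmetric 2n×2n matrix over ℝ. Define the Pfaffian pf(ω) = (1/(2ⁿ n!)) Σ_{σ ∈ S_{2n}} sgn(σ) · ω_{σ(1)σ(2)} ω_{σ(3)σ(4)} ⋯ ω_{σ(2n−1)σ(2n)}, and define the matrix A by A^{kl} = Σ ε^{i₁⋯i_{2n−2} k l} ω_{i₁i₂} ⋯ ω_{i_{2n−3}i_{2n−2}}, where the sum is over all indices i₁,…,i_{2n−2} ∈ {1,…,2n} and ε^{i₁⋯i_{2n−2}kl} is the Levi-Civita symbol on 2n indices. Then A ω = −2^{n−1}(n−1)! · pf(ω) · I, i.e. Σ_l A^{kl} ω_{lm} = −2^{n−1}(n−1)! pf(ω) δ^k_m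 for all k, m. -/
noncomputable section

/-- Levi-Civita symbol on `N` indices: the sign of `(v 0, …, v (N-1))` as a permutation of
`(0, …, N-1)`, and `0` if two of the indices coincide. -/
def epsN (N : ℕ) (v : Fin N → Fin N) : ℝ :=
  Matrix.det (Matrix.of fun r c : Fin N => if v r = c then (1 : ℝ) else 0)

/-- The Pfaffian of a `2n × 2n` matrix:
`pf(ω) = (1/(2ⁿ n!)) Σ_{σ ∈ S_{2n}} sgn(σ) ω_{σ(1)σ(2)} ⋯ ω_{σ(2n−1)σ(2n)}`. -/
def pf (n : ℕ) (ω : Matrix (Fin (2 * n)) (Fin (2 * n)) ℝ) : ℝ :=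
  (1 / (2 ^ n * (n.factorial : ℝ))) *
    ∑ σ : Equiv.Perm (Fin (2 * n)), ((Equiv.Perm.sign σ : ℤ) : ℝ) *
      ∏ j : Fin n, ω (σ ⟨2 * j.val, by have := j.isLt; omega⟩)
        (σ ⟨2 * j.val + 1, by have := j.isLt; omega⟩)

/-- The scaled Pfaffian adjugate:
`A^{kl} = Σ ε^{i₁⋯i_{2n−2} k l} ω_{i₁i₂} ⋯ ω_{i_{2n−3}i_{2n−2}}`, the sum being over all
indices `i₁,…,i_{2n−2} ∈ {1,…,2n}`. -/
def pfadj (n : ℕ) (ω : Matrix (Fin (2 * n)) (Fin (2 * n)) ℝ) :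
    Matrix (Fin (2 * n)) (Fin (2 * n)) ℝ :=
  fun k l =>
    ∑ v : Fin (2 * (n - 1)) → Fin (2 * n),
      epsN (2 * n)
          (fun r => if h : r.val < 2 * (n - 1) then v ⟨r.val, h⟩
            else if r.val = 2 * n - 2 then k else l) *
        ∏ j : Fin (n - 1), ω (v ⟨2 * j.val, by have := j.isLt; omega⟩)
          (v ⟨2 * j.val + 1, by have := j.isLt; omega⟩)

/-!
Write `n = q + 1`, pair the indices as `(2j, 2j+1)` and let `c = 2q`, `d = 2q+1` be the last pair.
Only bijective index tuples contribute to the Levi-Civita symbol, so `∑ₗ A^{kl} ω_{lm}` is the sum,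
over the permutations `σ` with `σ c = k`, of `sgn σ · ∏_{j<q} ω_{σ(2j) σ(2j+1)} · ω_{σ(d) m}`.

For `k = m` each summand is minus the Pfaffian summand `sgn σ · ∏_j ω_{σ(2j) σ(2j+1)}`. Pfaffian
summands are invariant under right multiplication by the swap inside a pair and by the exchange
of two pairs, and these permutations move `c` to any index; so the summands with `σ c = k` carry
exactly a `1/(2n)` share of `∑_σ = 2ⁿ n! pf(ω)`.

For `k ≠ m` split according to `s = σ⁻¹ m`: the fibre `s = c` is empty, on the fibre `s = d` the
factor `ω_{mm}` vanishes, and on every other fibre multiplying by the transposition of `d` with the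
partner of `s` is an odd bijection preserving the product, by skew-symmetry.
-/

open Finset Equiv

section PermSums

variable {α M : Type*} [Fintype α] [DecidableEq α]

theorem sum_sum_filter_apply_eq [AddCommMonoid M] (S : Finset (Perm α)) (F : Perm α → M)
    (k : α) : ∑ s, ∑ σ ∈ S with σ s = k, F σ = ∑ σ ∈ S, F σ := by
  rw [← Finset.sum_fiberwise S (fun σ => σ⁻¹ k) F]
  refine sum_congr rfl fun s _ => sum_congr (filter_congr fun σ _ => ?_) fun _ _ => rfl
  rw [Perm.inv_eq_iff_eq, eq_comm]

theorem sum_filter_apply_eq_of_mul_right_invariant [AddCommMonoid M] {F : Perm α → M}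
    {τ : Perm α} (hF : ∀ σ, F (σ * τ) = F σ) (a k : α) :
    ∑ σ with σ (τ a) = k, F σ = ∑ σ with σ a = k, F σ := by
  simp only [Finset.sum_filter]
  exact Fintype.sum_equiv (Equiv.mulRight τ) _ _ fun σ => by simp [hF]

theorem card_smul_sum_filter_apply_eq [AddCommMonoid M] {F : Perm α → M} {a : α}
    (hF : ∀ s, ∃ τ : Perm α, τ a = s ∧ ∀ σ, F (σ * τ) = F σ) (k : α) :
    Fintype.card α • ∑ σ with σ a = k, F σ = ∑ σ, F σ := by
  rw [← sum_sum_filter_apply_eq univ F k, ← Finset.card_univ, ← Finset.sum_const]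
  refine sum_congr rfl fun s _ => ?_
  obtain ⟨τ, rfl, hτ⟩ := hF s
  exact (sum_filter_apply_eq_of_mul_right_invariant hτ a k).symm

theorem sum_filter_eq_zero_of_mul_eq_neg [AddCommGroup M] [IsAddTorsionFree M]
    {p : Perm α → Prop} [DecidablePred p] {F : Perm α → M} (τ : Perm α)
    (hp : ∀ σ, p (σ * τ) ↔ p σ) (hF : ∀ σ, p σ → F (σ * τ) = -F σ) :
    ∑ σ with p σ, F σ = 0 := by
  refine self_eq_neg.mp ?_
  simp only [Finset.sum_filter, ← Finset.sum_neg_distrib]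
  refine Fintype.sum_equiv (Equiv.mulRight τ) _ _ fun σ => ?_
  by_cases h : p σ <;> simp [hp, h, hF]

end PermSums

theorem sum_sum_dite_eq_sum_filter {β M : Type*} [Fintype β] [DecidableEq β] [AddCommMonoid M]
    {N L : ℕ} (hL : L = N + 2) (k : β) (Φ : (Fin L → β) → M) :
    ∑ l, ∑ v : Fin N → β,
        Φ (fun r => if h : r.val < N then v ⟨r, h⟩ else if r.val = N then k else l) =
      ∑ w with w ⟨N, by omega⟩ = k, Φ w := by
  subst hL
  rw [← Fintype.sum_prod_type']
  refine sum_nbij' (fun x r => if h : r.val < N then x.2 ⟨r, h⟩ else if r.val = N then k else x.1)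
    (fun w => (w (Fin.last _), fun i => w ⟨i, by omega⟩)) (by simp) (by simp)
    (fun x _ => ?_) (fun w hw => ?_) (fun _ _ => rfl)
  · ext i
    · simp
    · simp
  · funext r
    simp only [mem_filter, mem_univ, true_and] at hw
    split_ifs with h₁ h₂
    · rfl
    · rw [show r = ⟨N, by omega⟩ from Fin.ext h₂, hw]
    · obtain rfl : r = Fin.last _ := Fin.ext (by simp only [Fin.val_last]; omega)
      rfl

theorem epsN_eq_zero_of_not_injective {N : ℕ} {v : Fin N → Fin N} (h : ¬Function.Injective v) :
    epsN N v = 0 := by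
  obtain ⟨a, b, hab, hne⟩ : ∃ a b, v a = v b ∧ a ≠ b := by
    simpa [Function.Injective] using h
  exact Matrix.det_zero_of_row_eq hne (funext fun c => by simp [hab])

theorem epsN_coe_perm {N : ℕ} (σ : Perm (Fin N)) : epsN N σ = (Perm.sign σ : ℤ) := by
  rw [epsN, ← Matrix.det_permutation σ]
  congr 1
  ext r c
  simp [Equiv.Perm.permMatrix, PEquiv.toMatrix_apply, eq_comm]

theorem sum_epsN_mul {N : ℕ} (Φ : (Fin N → Fin N) → ℝ) :
    ∑ w, epsN N w * Φ w = ∑ σ : Perm (Fin N), (Perm.sign σ : ℤ) * Φ σ := by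
  refine (Fintype.sum_of_injective _ DFunLike.coe_injective _ _ (fun w hw => ?_)
    fun σ => by rw [epsN_coe_perm]).symm
  refine mul_eq_zero_of_left (epsN_eq_zero_of_not_injective fun hinj => hw ?_) _
  exact ⟨Equiv.ofBijective w hinj.bijective_of_finite, rfl⟩

section Pairs

variable {n : ℕ}

def evenIdx (j : Fin n) : Fin (2 * n) := ⟨2 * j, by omega⟩

def oddIdx (j : Fin n) : Fin (2 * n) := ⟨2 * j + 1, by omega⟩

theorem evenIdx_injective : Function.Injective (evenIdx (n := n)) := fun i j h => by
  simpa [evenIdx, Fin.ext_iff] using h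

theorem oddIdx_injective : Function.Injective (oddIdx (n := n)) := fun i j h => by
  simpa [oddIdx, Fin.ext_iff] using h

@[simp]
theorem evenIdx_inj {i j : Fin n} : evenIdx i = evenIdx j ↔ i = j :=
  evenIdx_injective.eq_iff

@[simp]
theorem oddIdx_inj {i j : Fin n} : oddIdx i = oddIdx j ↔ i = j :=
  oddIdx_injective.eq_iff

@[simp]
theorem evenIdx_ne_oddIdx (i j : Fin n) : evenIdx i ≠ oddIdx j := by
  simp only [evenIdx, oddIdx, ne_eq, Fin.ext_iff]
  omega

@[simp]
theorem oddIdx_ne_evenIdx (i j : Fin n) : oddIdx i ≠ evenIdx j :=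
  (evenIdx_ne_oddIdx j i).symm

theorem exists_eq_evenIdx_or_eq_oddIdx (s : Fin (2 * n)) :
    ∃ j, s = evenIdx j ∨ s = oddIdx j := by
  refine ⟨⟨s / 2, by omega⟩, ?_⟩
  simp only [evenIdx, oddIdx, Fin.ext_iff]
  omega

end Pairs

section Pfaffian

variable {R : Type*} [CommRing R] {n : ℕ}

def pairProd (ω : Matrix (Fin (2 * n)) (Fin (2 * n)) R) (w : Fin (2 * n) → Fin (2 * n)) : R :=
  ∏ j, ω (w (evenIdx j)) (w (oddIdx j))

def pfTerm (ω : Matrix (Fin (2 * n)) (Fin (2 * n)) R) (σ : Perm (Fin (2 * n))) : R :=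
  (Perm.sign σ : ℤ) * pairProd ω σ

theorem pf_eq_sum_pfTerm (ω : Matrix (Fin (2 * n)) (Fin (2 * n)) ℝ) :
    pf n ω = 1 / (2 ^ n * (n.factorial : ℝ)) * ∑ σ, pfTerm ω σ :=
  rfl

theorem pfTerm_mul_swap_pair {ω : Matrix (Fin (2 * n)) (Fin (2 * n)) R}
    (hω : ∀ i j, ω j i = -ω i j) (σ : Perm (Fin (2 * n))) (j : Fin n) :
    pfTerm ω (σ * swap (evenIdx j) (oddIdx j)) = pfTerm ω σ := by
  have hrest : ∏ i ∈ {j}ᶜ, ω ((σ * swap (evenIdx j) (oddIdx j)) (evenIdx i))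
      ((σ * swap (evenIdx j) (oddIdx j)) (oddIdx i)) =
      ∏ i ∈ {j}ᶜ, ω (σ (evenIdx i)) (σ (oddIdx i)) :=
    prod_congr rfl fun i hi => by
      have hij : i ≠ j := by simpa using hi
      rw [Perm.mul_apply, Perm.mul_apply,
        swap_apply_of_ne_of_ne (evenIdx_injective.ne hij) (evenIdx_ne_oddIdx i j),
        swap_apply_of_ne_of_ne (oddIdx_ne_evenIdx i j) (oddIdx_injective.ne hij)]
  rw [pfTerm, pfTerm, pairProd, pairProd, Fintype.prod_eq_mul_prod_compl j, hrest,
    Fintype.prod_eq_mul_prod_compl j, Perm.sign_mul, Perm.sign_swap (evenIdx_ne_oddIdx j j)]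
  simp only [Perm.mul_apply, swap_apply_left, swap_apply_right]
  rw [hω (σ (evenIdx j))]
  push_cast
  ring

theorem pfTerm_mul_swap_swap (ω : Matrix (Fin (2 * n)) (Fin (2 * n)) R)
    (σ : Perm (Fin (2 * n))) (i j : Fin n) :
    pfTerm ω (σ * (swap (evenIdx i) (evenIdx j) * swap (oddIdx i) (oddIdx j))) = pfTerm ω σ := by
  have hsign : Perm.sign (swap (evenIdx i) (evenIdx j) * swap (oddIdx i) (oddIdx j)) = 1 := by
    by_cases hij : i = j
    · simp [hij]
    · rw [Perm.sign_mul, Perm.sign_swap (evenIdx_injective.ne hij),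
        Perm.sign_swap (oddIdx_injective.ne hij), Int.units_mul_self]
  have hprod : pairProd ω ⇑(σ * (swap (evenIdx i) (evenIdx j) * swap (oddIdx i) (oddIdx j))) =
      pairProd ω σ := by
    have hodd (l : Fin n) : swap (evenIdx i) (evenIdx j) (oddIdx l) = oddIdx l :=
      swap_apply_of_ne_of_ne (oddIdx_ne_evenIdx l i) (oddIdx_ne_evenIdx l j)
    have heven (l : Fin n) : swap (oddIdx i) (oddIdx j) (evenIdx l) = evenIdx l :=
      swap_apply_of_ne_of_ne (evenIdx_ne_oddIdx l i) (evenIdx_ne_oddIdx l j)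
    refine Fintype.prod_equiv (swap i j) _ _ fun l => ?_
    simp only [Perm.mul_apply, heven, hodd, evenIdx_injective.swap_apply,
      oddIdx_injective.swap_apply]
  rw [pfTerm, pfTerm, Perm.sign_mul, hsign, mul_one, hprod]

theorem exists_apply_evenIdx_eq_and_pfTerm_mul {ω : Matrix (Fin (2 * n)) (Fin (2 * n)) R}
    (hω : ∀ i j, ω j i = -ω i j) (i : Fin n) (s : Fin (2 * n)) :
    ∃ τ : Perm (Fin (2 * n)), τ (evenIdx i) = s ∧ ∀ σ, pfTerm ω (σ * τ) = pfTerm ω σ := by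
  obtain ⟨j, rfl | rfl⟩ := exists_eq_evenIdx_or_eq_oddIdx s
  · refine ⟨swap (evenIdx i) (evenIdx j) * swap (oddIdx i) (oddIdx j), ?_,
      fun σ => pfTerm_mul_swap_swap ω σ i j⟩
    simp [swap_apply_of_ne_of_ne (evenIdx_ne_oddIdx i i) (evenIdx_ne_oddIdx i j)]
  · refine ⟨swap (evenIdx j) (oddIdx j) * (swap (evenIdx i) (evenIdx j) *
      swap (oddIdx i) (oddIdx j)), ?_, fun σ => ?_⟩
    · simp [swap_apply_of_ne_of_ne (evenIdx_ne_oddIdx i i) (evenIdx_ne_oddIdx i j)]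
    · rw [← mul_assoc, pfTerm_mul_swap_swap, pfTerm_mul_swap_pair hω]

theorem sum_pfTerm_eq_mul_sum_filter_apply_evenIdx {ω : Matrix (Fin (2 * n)) (Fin (2 * n)) R}
    (hω : ∀ i j, ω j i = -ω i j) (i : Fin n) (k : Fin (2 * n)) :
    ∑ σ, pfTerm ω σ = 2 * n * ∑ σ with σ (evenIdx i) = k, pfTerm ω σ := by
  rw [← card_smul_sum_filter_apply_eq (exists_apply_evenIdx_eq_and_pfTerm_mul hω i) k,
    Fintype.card_fin, nsmul_eq_mul]
  push_cast
  rfl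

end Pfaffian

section Adjugate

variable {R : Type*} [CommRing R] {q : ℕ}

def adjProd (ω : Matrix (Fin (2 * (q + 1))) (Fin (2 * (q + 1))) R) (m : Fin (2 * (q + 1)))
    (w : Fin (2 * (q + 1)) → Fin (2 * (q + 1))) : R :=
  (∏ j : Fin q, ω (w (evenIdx j.castSucc)) (w (oddIdx j.castSucc))) *
    ω (w (oddIdx (Fin.last q))) m

theorem sum_pfadj_mul_eq_sum_sign_mul_adjProd
    (ω : Matrix (Fin (2 * (q + 1))) (Fin (2 * (q + 1))) ℝ) (k m : Fin (2 * (q + 1))) :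
    ∑ l, pfadj (q + 1) ω k l * ω l m =
      ∑ σ : Perm (Fin (2 * (q + 1))) with σ (evenIdx (Fin.last q)) = k,
        (Perm.sign σ : ℤ) * adjProd ω m σ := by
  have hpfadj (l : Fin (2 * (q + 1))) : pfadj (q + 1) ω k l =
      ∑ v : Fin (2 * q) → Fin (2 * (q + 1)), epsN (2 * (q + 1))
        (fun r => if h : r.val < 2 * q then v ⟨r, h⟩ else if r.val = 2 * q then k else l) *
        ∏ j : Fin q, ω (v ⟨2 * j, by omega⟩) (v ⟨2 * j + 1, by omega⟩) :=
    rfl -- `2 * (q + 1 - 1)` and `2 * (q + 1) - 2` reduce to `2 * q`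
  simp only [hpfadj, sum_mul]
  refine Eq.trans ?_ ((sum_sum_dite_eq_sum_filter (N := 2 * q) (by ring) k
    (fun w => epsN (2 * (q + 1)) w * adjProd ω m w)).trans ?_)
  · refine sum_congr rfl fun l _ => sum_congr rfl fun v _ => ?_
    rw [adjProd, mul_assoc]
    congr 2
    · refine prod_congr rfl fun j _ => ?_
      rw [dif_pos (show (evenIdx j.castSucc : ℕ) < 2 * q by simp [evenIdx]),
        dif_pos (show (oddIdx j.castSucc : ℕ) < 2 * q by simp [oddIdx]; omega)]
      rfl
    · rw [dif_neg (show ¬(oddIdx (Fin.last q) : ℕ) < 2 * q by simp [oddIdx]),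
        if_neg (show (oddIdx (Fin.last q) : ℕ) ≠ 2 * q by simp [oddIdx])]
  · simp only [sum_filter, ← mul_ite_zero]
    exact sum_epsN_mul _

theorem adjProd_apply_evenIdx_last {ω : Matrix (Fin (2 * (q + 1))) (Fin (2 * (q + 1))) R}
    (hω : ∀ i j, ω j i = -ω i j) (w : Fin (2 * (q + 1)) → Fin (2 * (q + 1))) :
    adjProd ω (w (evenIdx (Fin.last q))) w = -pairProd ω w := by
  rw [adjProd, pairProd, Fin.prod_univ_castSucc, hω]
  ring

theorem adjProd_mul_swap {ω : Matrix (Fin (2 * (q + 1))) (Fin (2 * (q + 1))) R}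
    (hω : ∀ i j, ω j i = -ω i j) {j : Fin q} {s p : Fin (2 * (q + 1))}
    (hpair : s = evenIdx j.castSucc ∧ p = oddIdx j.castSucc ∨
      s = oddIdx j.castSucc ∧ p = evenIdx j.castSucc)
    {σ : Perm (Fin (2 * (q + 1)))} {m : Fin (2 * (q + 1))} (hσ : σ s = m) :
    adjProd ω m ⇑(σ * swap p (oddIdx (Fin.last q))) = adjProd ω m σ := by
  have hfix (i : Fin q) (hij : i ≠ j) (x : Fin (2 * (q + 1)))
      (hx : x = evenIdx i.castSucc ∨ x = oddIdx i.castSucc) :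
      swap p (oddIdx (Fin.last q)) x = x := by
    refine swap_apply_of_ne_of_ne ?_ ?_ <;>
      rcases hpair with ⟨-, rfl⟩ | ⟨-, rfl⟩ <;> rcases hx with rfl | rfl <;>
      simp [hij, Fin.castSucc_ne_last]
  have hrest : ∏ i ∈ {j}ᶜ, ω ((σ * swap p (oddIdx (Fin.last q))) (evenIdx i.castSucc))
      ((σ * swap p (oddIdx (Fin.last q))) (oddIdx i.castSucc)) =
      ∏ i ∈ {j}ᶜ, ω (σ (evenIdx i.castSucc)) (σ (oddIdx i.castSucc)) :=
    prod_congr rfl fun i hi => by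
      have hij : i ≠ j := by simpa using hi
      rw [Perm.mul_apply, Perm.mul_apply, hfix i hij _ (.inl rfl), hfix i hij _ (.inr rfl)]
  rw [adjProd, adjProd, Fintype.prod_eq_mul_prod_compl j, hrest, Fintype.prod_eq_mul_prod_compl j]
  rcases hpair with ⟨rfl, rfl⟩ | ⟨rfl, rfl⟩
  · simp only [Perm.mul_apply, swap_apply_left, swap_apply_right,
      swap_apply_of_ne_of_ne (evenIdx_ne_oddIdx _ _) (evenIdx_ne_oddIdx _ _), hσ]
    rw [hω m, hω m]
    ring
  · simp only [Perm.mul_apply, swap_apply_left, swap_apply_right,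
      swap_apply_of_ne_of_ne (oddIdx_ne_evenIdx _ _)
        (oddIdx_injective.ne (Fin.castSucc_ne_last j)), hσ]
    ring

theorem sum_sign_mul_adjProd_self {ω : Matrix (Fin (2 * (q + 1))) (Fin (2 * (q + 1))) R}
    (hω : ∀ i j, ω j i = -ω i j) (k : Fin (2 * (q + 1))) :
    ∑ σ : Perm (Fin (2 * (q + 1))) with σ (evenIdx (Fin.last q)) = k,
      ((Perm.sign σ : ℤ) : R) * adjProd ω k σ =
      -∑ σ : Perm (Fin (2 * (q + 1))) with σ (evenIdx (Fin.last q)) = k, pfTerm ω σ := by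
  rw [← sum_neg_distrib]
  refine sum_congr rfl fun σ hσ => ?_
  rw [← (mem_filter.mp hσ).2, adjProd_apply_evenIdx_last hω, pfTerm, mul_neg]

theorem sum_sign_mul_adjProd_eq_zero [IsAddTorsionFree R]
    {ω : Matrix (Fin (2 * (q + 1))) (Fin (2 * (q + 1))) R} (hω : ∀ i j, ω j i = -ω i j)
    {k m : Fin (2 * (q + 1))} (hkm : k ≠ m) :
    ∑ σ : Perm (Fin (2 * (q + 1))) with σ (evenIdx (Fin.last q)) = k,
      ((Perm.sign σ : ℤ) : R) * adjProd ω m σ = 0 := by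
  rw [← sum_sum_filter_apply_eq _ _ m]
  refine sum_eq_zero fun s _ => ?_
  rw [filter_filter]
  obtain ⟨j, hs⟩ := exists_eq_evenIdx_or_eq_oddIdx s
  induction j using Fin.lastCases with
  | last =>
    refine sum_eq_zero fun σ hσ => ?_
    rw [mem_filter] at hσ
    rcases hs with rfl | rfl
    · exact absurd (hσ.2.1.symm.trans hσ.2.2) hkm
    · have hmm : ω m m = 0 := self_eq_neg.mp (hω m m)
      rw [adjProd, hσ.2.2, hmm, mul_zero, mul_zero]
  | cast j =>
    obtain ⟨p, hpair⟩ : ∃ p, s = evenIdx j.castSucc ∧ p = oddIdx j.castSucc ∨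
        s = oddIdx j.castSucc ∧ p = evenIdx j.castSucc := by
      rcases hs with hs | hs
      exacts [⟨_, .inl ⟨hs, rfl⟩⟩, ⟨_, .inr ⟨hs, rfl⟩⟩]
    have hne : s ≠ p ∧ s ≠ oddIdx (Fin.last q) ∧ evenIdx (Fin.last q) ≠ p ∧
        evenIdx (Fin.last q) ≠ oddIdx (Fin.last q) ∧ p ≠ oddIdx (Fin.last q) := by
      rcases hpair with ⟨rfl, rfl⟩ | ⟨rfl, rfl⟩ <;>
        simp [Fin.castSucc_ne_last, (Fin.castSucc_ne_last _).symm]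
    obtain ⟨hsp, hsd, hcp, hcd, hpd⟩ := hne
    refine sum_filter_eq_zero_of_mul_eq_neg (swap p (oddIdx (Fin.last q))) (fun σ => ?_)
      fun σ hσ => ?_
    · rw [Perm.mul_apply, Perm.mul_apply, swap_apply_of_ne_of_ne hcp hcd,
        swap_apply_of_ne_of_ne hsp hsd]
    · rw [Perm.sign_mul, Perm.sign_swap hpd, adjProd_mul_swap hω hpair hσ.2]
      push_cast
      ring

end Adjugate

/-- scaled Pfaffian adjugate identity: for a skew-symmetric `2n × 2n` real
matrix `ω` (`n ≥ 1`), one has `A ω = −2^{n−1}(n−1)! pf(ω) · I`, i.e.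
`Σ_l A^{kl} ω_{lm} = −2^{n−1}(n−1)! pf(ω) δ^k_m`. -/
theorem stmt6 (n : ℕ) (hn : 1 ≤ n) (ω : Matrix (Fin (2 * n)) (Fin (2 * n)) ℝ)
    (hskew : ω.transpose = -ω) :
    ∀ k m : Fin (2 * n),
      ∑ l, pfadj n ω k l * ω l m =
        -(2 ^ (n - 1) * ((n - 1).factorial : ℝ)) * pf n ω *
          (if k = m then (1 : ℝ) else 0) := by
  intro k m
  obtain ⟨q, rfl⟩ : ∃ q, n = q + 1 := ⟨n - 1, by omega⟩
  have hω : ∀ i j, ω j i = -ω i j := fun i j => congrFun (congrFun hskew i) j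
  rw [sum_pfadj_mul_eq_sum_sign_mul_adjProd]
  split_ifs with hkm
  · subst hkm
    rw [sum_sign_mul_adjProd_self hω, pf_eq_sum_pfTerm,
      sum_pfTerm_eq_mul_sum_filter_apply_evenIdx hω (Fin.last q) k,
      Nat.add_sub_cancel, Nat.factorial_succ]
    push_cast
    field_simp
    ring
  · rw [sum_sign_mul_adjProd_eq_zero hω hkm, mul_zero]
end
end

section
/- Let Θ : ℝ¹⁰ → ℝ be a smooth function of (x¹,…,x⁵,y¹,…,y⁵) and set ω_{ik} = Θ_{x^i y^k} − Θ_{x^k y^i} for i,k = 1,…,5. Define H^p = Σ_{i,k,l,m=1}^{5} ε^{iklmp} ω_{ik} ω_{lm} for p = 1,…,5, where ε^{iklmp} is the Levi-Civita symbol on five indices. Then the conservation identities Σ_{p=1}^{5} ∂_{x^p} H^p = 0 and Σ_{p=1}^{5} ∂_{y^p} H^p = 0 hold at every point of ℝ¹⁰. -/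
noncomputable section

/-- `∂/∂x^i` on functions of `(x¹,…,x⁵,y¹,…,y⁵) ∈ ℝ¹⁰`. -/
def px5 (i : Fin 5) (f : (Fin 10 → ℝ) → ℝ) : (Fin 10 → ℝ) → ℝ :=
  pd ⟨i.val, by omega⟩ f

/-- `∂/∂y^i` on functions of `(x¹,…,x⁵,y¹,…,y⁵) ∈ ℝ¹⁰`. -/
def py5 (i : Fin 5) (f : (Fin 10 → ℝ) → ℝ) : (Fin 10 → ℝ) → ℝ :=
  pd ⟨i.val + 5, by omega⟩ f

/-- Levi-Civita symbol on indices `1,…,5`. -/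
def eps5 (i k l m p : Fin 5) : ℝ :=
  Matrix.det (Matrix.of fun r c : Fin 5 => if (![i, k, l, m, p]) r = c then (1 : ℝ) else 0)

/-- `ω_{ik} = Θ_{x^i y^k} − Θ_{x^k y^i}`. -/
def omg5 (Θ : (Fin 10 → ℝ) → ℝ) (i k : Fin 5) : (Fin 10 → ℝ) → ℝ :=
  fun p => px5 i (py5 k Θ) p - px5 k (py5 i Θ) p

/-- `H^p = Σ_{i,k,l,m} ε^{iklmp} ω_{ik} ω_{lm}`. -/
def Hfun (Θ : (Fin 10 → ℝ) → ℝ) (p : Fin 5) : (Fin 10 → ℝ) → ℝ :=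
  fun pt => ∑ i, ∑ k, ∑ l, ∑ m, eps5 i k l m p * omg5 Θ i k pt * omg5 Θ l m pt

/-! In the `x`-variables `ω` is the curl of the `y`-gradient of `Θ`, and in the `y`-variables it
is (with its indices swapped) the curl of the `x`-gradient; either way it is closed:
`∂_p ω_ik + ∂_i ω_kp + ∂_k ω_pi = 0` by symmetry of second derivatives. By the Leibniz rule
and `ε^{iklmp} = ε^{lmikp}`, `∂_p H^p = 2 Σ ε^{iklmp} ∂_p ω_ik ω_lm`. The weight
`Σ_{l,m} ε^{iklmp} ω_lm` is invariant under cyclic permutations of `(p, i, k)`, so the sum is a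
third of the same sum taken against the cyclic sum of `∂ω`, which vanishes. -/

open Finset

section PartialDerivatives

variable {n : ℕ}

lemma ContDiff.pd {m : WithTop ℕ∞} {f : (Fin n → ℝ) → ℝ} (hf : ContDiff ℝ (m + 1) f)
    (i : Fin n) : ContDiff ℝ m (pd i f) :=
  (hf.fderiv_right le_rfl).clm_apply contDiff_const

lemma pd_comm {f : (Fin n → ℝ) → ℝ} {x : Fin n → ℝ} (hf : ContDiffAt ℝ 2 f x) (a b : Fin n) :
    pd a (pd b f) x = pd b (pd a f) x := by
  have hf' : DifferentiableAt ℝ (fderiv ℝ f) x :=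
    (hf.fderiv_right (m := 1) le_rfl).differentiableAt one_ne_zero
  have hpd : ∀ c d : Fin n,
      pd c (pd d f) x = fderiv ℝ (fderiv ℝ f) x (Pi.single c 1) (Pi.single d 1) := by
    intro c d
    change fderiv ℝ (fun q => fderiv ℝ f q (Pi.single d 1)) x (Pi.single c 1) = _
    simp [fderiv_clm_apply hf' (differentiableAt_const _)]
  rw [hpd, hpd, hf.isSymmSndFDerivAt (by simp)]

lemma pd_sub {f g : (Fin n → ℝ) → ℝ} {x : Fin n → ℝ} (hf : DifferentiableAt ℝ f x)
    (hg : DifferentiableAt ℝ g x) (a : Fin n) :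
    pd a (fun q => f q - g q) x = pd a f x - pd a g x := by
  simp [pd, fderiv_fun_sub hf hg]

lemma pd_sum_eps5_mul_mul (ω : Fin 5 → Fin 5 → (Fin n → ℝ) → ℝ) {x : Fin n → ℝ}
    (hω : ∀ i k, DifferentiableAt ℝ (ω i k) x) (a : Fin n) (p : Fin 5) :
    pd a (fun q => ∑ i, ∑ k, ∑ l, ∑ m, eps5 i k l m p * ω i k q * ω l m q) x =
      ∑ i, ∑ k, ∑ l, ∑ m, eps5 i k l m p *
        (pd a (ω i k) x * ω l m x + ω i k x * pd a (ω l m) x) := by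
  have hω' : ∀ i k, HasFDerivAt (ω i k) (fderiv ℝ (ω i k) x) x :=
    fun i k => (hω i k).hasFDerivAt
  have hH := HasFDerivAt.fun_sum (u := univ) fun i _ => HasFDerivAt.fun_sum (u := univ)
    fun k _ => HasFDerivAt.fun_sum (u := univ) fun l _ => HasFDerivAt.fun_sum (u := univ)
    fun m _ => ((hω' i k).const_mul (eps5 i k l m p)).fun_mul (hω' l m)
  simp only [pd, hH.fderiv, FunLike.coe_sum, Finset.sum_apply, add_apply,
    smul_apply, smul_eq_mul]
  exact sum_congr rfl fun i _ => sum_congr rfl fun k _ => sum_congr rfl fun l _ =>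
    sum_congr rfl fun m _ => by ring

variable {ι : Type*}

def curl (a : ι → Fin n) (u : ι → (Fin n → ℝ) → ℝ) (i k : ι) : (Fin n → ℝ) → ℝ :=
  fun q => pd (a i) (u k) q - pd (a k) (u i) q

lemma ContDiff.curl {m : WithTop ℕ∞} (a : ι → Fin n) {u : ι → (Fin n → ℝ) → ℝ}
    (hu : ∀ i, ContDiff ℝ (m + 1) (u i)) (i k : ι) : ContDiff ℝ m (curl a u i k) :=
  ((hu k).pd (a i)).sub ((hu i).pd (a k))

lemma pd_curl_cyclic (a : ι → Fin n) {u : ι → (Fin n → ℝ) → ℝ} (hu : ∀ i, ContDiff ℝ 2 (u i))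
    (x : Fin n → ℝ) (p i k : ι) :
    pd (a p) (curl a u i k) x + pd (a i) (curl a u k p) x + pd (a k) (curl a u p i) x = 0 := by
  have hd : ∀ j l, DifferentiableAt ℝ (pd (a j) (u l)) x :=
    fun j l => (((hu l).pd (m := 1) (a j)).differentiable one_ne_zero) x
  have hc : ∀ j l r, pd (a j) (pd (a l) (u r)) x = pd (a l) (pd (a j) (u r)) x :=
    fun j l r => pd_comm (hu r).contDiffAt (a j) (a l)
  have hsub : ∀ j l r, pd (a j) (curl a u l r) x
      = pd (a j) (pd (a l) (u r)) x - pd (a j) (pd (a r) (u l)) x :=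
    fun j l r => pd_sub (hd _ _) (hd _ _) _
  rw [hsub, hsub, hsub]
  linear_combination hc p i k - hc p k i + hc i k p

end PartialDerivatives

def leviCivita {n : ℕ} (v : Fin n → Fin n) : ℝ :=
  Matrix.det (Matrix.of fun r c => if v r = c then (1 : ℝ) else 0)

lemma leviCivita_comp_perm {n : ℕ} (v : Fin n → Fin n) (σ : Equiv.Perm (Fin n)) :
    leviCivita (v ∘ σ) = Equiv.Perm.sign σ * leviCivita v :=
  Matrix.det_permute σ (Matrix.of fun r c => if v r = c then (1 : ℝ) else 0)

lemma eps5_eq_leviCivita (i k l m p : Fin 5) : eps5 i k l m p = leviCivita ![i, k, l, m, p] :=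
  rfl

lemma eps5_cycle (i k l m p : Fin 5) : eps5 k p l m i = eps5 i k l m p := by
  have hσ : ![k, p, l, m, i]
      = ![i, k, l, m, p] ∘ ⇑(Equiv.swap 0 1 * Equiv.swap 1 4 : Equiv.Perm (Fin 5)) := by
    ext r; fin_cases r <;> simp [Equiv.swap_apply_def]
  rw [eps5_eq_leviCivita, hσ, leviCivita_comp_perm, eps5_eq_leviCivita]
  simp [show Equiv.Perm.sign (Equiv.swap (0 : Fin 5) 1 * Equiv.swap 1 4) = 1 by decide]

lemma eps5_swap_pairs (i k l m p : Fin 5) : eps5 l m i k p = eps5 i k l m p := by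
  have hσ : ![l, m, i, k, p]
      = ![i, k, l, m, p] ∘ ⇑(Equiv.swap 0 2 * Equiv.swap 1 3 : Equiv.Perm (Fin 5)) := by
    ext r; fin_cases r <;> simp [Equiv.swap_apply_def]
  rw [eps5_eq_leviCivita, hσ, leviCivita_comp_perm, eps5_eq_leviCivita]
  simp [show Equiv.Perm.sign (Equiv.swap (0 : Fin 5) 2 * Equiv.swap 1 3) = 1 by decide]

lemma sum_mul_eq_zero_of_cyclic {ι : Type*} [Fintype ι] (c W : ι → ι → ι → ℝ)
    (hc : ∀ p i k, c p i k + c i k p + c k p i = 0) (hW : ∀ p i k, W i k p = W p i k) :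
    ∑ p, ∑ i, ∑ k, c p i k * W p i k = 0 := by
  have hrot : ∀ c' : ι → ι → ι → ℝ,
      ∑ p, ∑ i, ∑ k, c' p i k * W p i k = ∑ p, ∑ i, ∑ k, c' i k p * W p i k := fun c' =>
    sum_comm_cycle.trans <| sum_congr rfl fun p _ => sum_congr rfl fun i _ =>
      sum_congr rfl fun k _ => by rw [hW]
  have h₃ : ∑ p, ∑ i, ∑ k, (c p i k + c i k p + c k p i) * W p i k = 0 := by
    simp only [hc, zero_mul, sum_const_zero]
  simp only [add_mul, sum_add_distrib, ← hrot (fun p i k => c i k p), ← hrot c] at h₃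
  linarith

lemma sum_eps5_mul_cyclic_eq_zero (w : Fin 5 → Fin 5 → ℝ) (c : Fin 5 → Fin 5 → Fin 5 → ℝ)
    (hc : ∀ p i k, c p i k + c i k p + c k p i = 0) :
    ∑ p, ∑ i, ∑ k, ∑ l, ∑ m, eps5 i k l m p * (c p i k * w l m + w i k * c p l m) = 0 := by
  have hpair : ∀ p, ∑ i, ∑ k, ∑ l, ∑ m, eps5 i k l m p * (w i k * c p l m)
      = ∑ i, ∑ k, ∑ l, ∑ m, eps5 i k l m p * (c p i k * w l m) := fun p =>
    sum_comm_cycle.trans <| sum_congr rfl fun l _ => sum_comm_cycle.trans <|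
      sum_congr rfl fun m _ => sum_congr rfl fun i _ => sum_congr rfl fun k _ => by
        rw [eps5_swap_pairs]; ring
  have hW : ∀ p i k, ∑ l, ∑ m, eps5 k p l m i * w l m = ∑ l, ∑ m, eps5 i k l m p * w l m :=
    fun p i k => by simp only [eps5_cycle]
  calc _ = 2 * ∑ p, ∑ i, ∑ k, c p i k * ∑ l, ∑ m, eps5 i k l m p * w l m := by
        simp only [mul_add, sum_add_distrib, hpair, ← two_mul, mul_sum, mul_left_comm (c _ _ _)]
    _ = 0 := by rw [sum_mul_eq_zero_of_cyclic c _ hc hW, mul_zero]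

lemma sum_pd_eps5_mul_mul_eq_zero {n : ℕ} (a : Fin 5 → Fin n)
    (ω : Fin 5 → Fin 5 → (Fin n → ℝ) → ℝ) {x : Fin n → ℝ}
    (hω : ∀ i k, DifferentiableAt ℝ (ω i k) x)
    (hclosed : ∀ p i k, pd (a p) (ω i k) x + pd (a i) (ω k p) x + pd (a k) (ω p i) x = 0) :
    ∑ p, pd (a p) (fun q => ∑ i, ∑ k, ∑ l, ∑ m, eps5 i k l m p * ω i k q * ω l m q) x = 0 := by
  simp only [pd_sum_eps5_mul_mul ω hω]
  exact sum_eps5_mul_cyclic_eq_zero (fun l m => ω l m x) (fun p i k => pd (a p) (ω i k) x) hclosed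

lemma omg5_eq_curl_x (Θ : (Fin 10 → ℝ) → ℝ) :
    omg5 Θ = curl (Fin.castAdd 5) (fun k => py5 k Θ) :=
  rfl

lemma omg5_eq_curl_y {Θ : (Fin 10 → ℝ) → ℝ} (hΘ : ContDiff ℝ 2 Θ) (i k : Fin 5) :
    omg5 Θ i k = curl (Fin.addNat · 5) (fun j => px5 j Θ) k i := by
  ext x
  exact congrArg₂ (· - ·) (pd_comm hΘ.contDiffAt _ _) (pd_comm hΘ.contDiffAt _ _)

/-- the conservation identities `Σ_p ∂_{x^p} H^p = 0` and
`Σ_p ∂_{y^p} H^p = 0` hold at every point of `ℝ¹⁰`. -/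
theorem stmt9 (Θ : (Fin 10 → ℝ) → ℝ) (hΘ : ContDiff ℝ (⊤ : ℕ∞) Θ) :
    ∀ pt : Fin 10 → ℝ,
      (∑ p : Fin 5, px5 p (Hfun Θ p) pt = 0) ∧
      (∑ p : Fin 5, py5 p (Hfun Θ p) pt = 0) := by
  intro pt
  have hΘ3 : ContDiff ℝ 3 Θ := hΘ.of_le (WithTop.coe_le_coe.mpr le_top)
  have hx : ∀ j, ContDiff ℝ 2 (px5 j Θ) := fun j => hΘ3.pd _
  have hy : ∀ j, ContDiff ℝ 2 (py5 j Θ) := fun j => hΘ3.pd _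
  have hω : ∀ i k, DifferentiableAt ℝ (omg5 Θ i k) pt := by
    rw [omg5_eq_curl_x]
    exact fun i k => ((ContDiff.curl (m := 1) _ hy i k).differentiable one_ne_zero) pt
  constructor
  · refine sum_pd_eps5_mul_mul_eq_zero (Fin.castAdd 5) (omg5 Θ) hω ?_
    rw [omg5_eq_curl_x]
    exact pd_curl_cyclic _ hy pt
  · refine sum_pd_eps5_mul_mul_eq_zero (Fin.addNat · 5) (omg5 Θ) hω fun p i k => ?_
    simp only [omg5_eq_curl_y (hΘ3.of_le (by norm_num))]
    linear_combination pd_curl_cyclic (Fin.addNat · 5) hx pt p k i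
end
end

section
/- (Reduction to the 6-dimensional second heavenly equation.) Let Ξ : ℝ⁶ → ℝ be a smooth function of (x³,x⁴,y¹,y²,y³,y⁴) and define Θ : ℝ⁸ → ℝ by Θ(x¹,…,x⁴,y¹,…,y⁴) = x¹y² + Ξ(x³,x⁴,y¹,y²,y³,y⁴). Then Θ satisfies the 4+4-dimensional TED equation at a point if and only if Ξ satisfies the 6-dimensional second heavenly equation Ξ_{x³y⁴} − Ξ_{x⁴y³} = Ξ_{x³y¹} Ξ_{x⁴y²} − Ξ_{x³y²} Ξ_{x⁴y¹} at the corresponding point. -/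
/-!
Write `Θ = x¹y² + Ξ ∘ π`, where `π` is the linear projection onto `(x³,x⁴,y¹,y²,y³,y⁴)`.
The Hessian of `Θ` is then the constant Hessian of `x¹y²` plus the pullback of the Hessian
of `Ξ` along `π`. Since `x¹, x²` do not occur in `Ξ`, this gives `ω₁₂ = 1`, while `ω₃₄`,
`ω₂₃`, `ω₁₄`, `ω₃₁`, `ω₂₄` are mixed second derivatives of `Ξ`; the TED equation
`ω₁₂ ω₃₄ + ω₂₃ ω₁₄ + ω₃₁ ω₂₄ = 0` thereby becomes the second heavenly equation for `Ξ`.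
-/

noncomputable section

/-- The left-hand side of the 4+4-dimensional TED equation. -/
def tedLHS (Θ : (Fin 8 → ℝ) → ℝ) (p : Fin 8 → ℝ) : ℝ :=
  omg Θ 0 1 p * omg Θ 2 3 p + omg Θ 1 2 p * omg Θ 0 3 p + omg Θ 2 0 p * omg Θ 1 3 p

/-- The function `Θ(x¹,…,x⁴,y¹,…,y⁴) = x¹y² + Ξ(x³,x⁴,y¹,y²,y³,y⁴)`; the variables of `Ξ`
are ordered `(x³,x⁴,y¹,y²,y³,y⁴)`. -/
def ThetaOf (Ξ : (Fin 6 → ℝ) → ℝ) : (Fin 8 → ℝ) → ℝ :=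
  fun p => p 0 * p 5 + Ξ (fun j => p (![2, 3, 4, 5, 6, 7] j))

section Hessian

variable {𝕜 E F G : Type*} [NontriviallyNormedField 𝕜]
  [NormedAddCommGroup E] [NormedSpace 𝕜 E] [NormedAddCommGroup F] [NormedSpace 𝕜 F]
  [NormedAddCommGroup G] [NormedSpace 𝕜 G]

theorem fderiv_fderiv_apply_eq_iteratedFDeriv (f : E → F) (x v w : E) :
    fderiv 𝕜 (fderiv 𝕜 f) x v w = iteratedFDeriv 𝕜 2 f x ![v, w] := by
  simp only [iteratedFDeriv_two_apply, Matrix.cons_val_zero, Matrix.cons_val_one]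

theorem fderiv_fderiv_add_apply {f g : E → F} {x : E} (hf : ContDiffAt 𝕜 2 f x)
    (hg : ContDiffAt 𝕜 2 g x) (v w : E) :
    fderiv 𝕜 (fderiv 𝕜 (f + g)) x v w
      = fderiv 𝕜 (fderiv 𝕜 f) x v w + fderiv 𝕜 (fderiv 𝕜 g) x v w := by
  simp only [fderiv_fderiv_apply_eq_iteratedFDeriv,
    iteratedFDeriv_add_apply hf hg]
  rfl

theorem fderiv_fderiv_comp_clm_apply {g : F → G} (hg : ContDiff 𝕜 2 g) (L : E →L[𝕜] F)
    (x v w : E) :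
    fderiv 𝕜 (fderiv 𝕜 (g ∘ L)) x v w = fderiv 𝕜 (fderiv 𝕜 g) (L x) (L v) (L w) := by
  simp only [fderiv_fderiv_apply_eq_iteratedFDeriv, L.iteratedFDeriv_comp_right hg x le_rfl,
    ContinuousMultilinearMap.compContinuousLinearMap_apply]
  congr 1
  ext i
  fin_cases i <;> rfl

theorem fderiv_fderiv_mul_clm_apply (ℓ₁ ℓ₂ : E →L[𝕜] 𝕜) (x v w : E) :
    fderiv 𝕜 (fderiv 𝕜 fun y => ℓ₁ y * ℓ₂ y) x v w = ℓ₁ v * ℓ₂ w + ℓ₂ v * ℓ₁ w := by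
  have hfderiv : fderiv 𝕜 (fun y => ℓ₁ y * ℓ₂ y) = ⇑(ℓ₁.smulRight ℓ₂ + ℓ₂.smulRight ℓ₁) := by
    ext1 y
    rw [fderiv_fun_mul ℓ₁.differentiableAt ℓ₂.differentiableAt, ℓ₁.fderiv, ℓ₂.fderiv]
    ext z
    simp [mul_comm]
  rw [hfderiv, ContinuousLinearMap.fderiv]
  simp [mul_comm]

end Hessian

theorem pd_pd_eq_fderiv_fderiv {n : ℕ} {f : (Fin n → ℝ) → ℝ} {q : Fin n → ℝ}
    (hf : ContDiffAt ℝ 2 f q) (a b : Fin n) :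
    pd a (pd b f) q = fderiv ℝ (fderiv ℝ f) q (Pi.single a 1) (Pi.single b 1) := by
  have hdiff : DifferentiableAt ℝ (fderiv ℝ f) q :=
    (hf.fderiv_right (m := 1) le_rfl).differentiableAt one_ne_zero
  change fderiv ℝ (fun y => fderiv ℝ f y (Pi.single b 1)) q (Pi.single a 1) = _
  simp [fderiv_clm_apply hdiff (differentiableAt_const _)]

section FunLeft

variable {ι κ : Type*}

def funLeftCLM (σ : κ → ι) : (ι → ℝ) →L[ℝ] (κ → ℝ) :=
  ContinuousLinearMap.pi fun j => ContinuousLinearMap.proj (σ j)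

theorem funLeftCLM_single_of_injective [DecidableEq ι] [DecidableEq κ] {σ : κ → ι}
    (hσ : σ.Injective) (j : κ) : funLeftCLM σ (Pi.single (σ j) 1) = Pi.single j 1 :=
  Function.update_comp_eq_of_injective _ hσ j 1

theorem funLeftCLM_single_of_forall_ne [DecidableEq ι] {σ : κ → ι} {a : ι}
    (h : ∀ j, σ j ≠ a) : funLeftCLM σ (Pi.single a 1) = 0 :=
  Function.update_comp_eq_of_forall_ne _ 1 h

end FunLeft

def xiCoords : (Fin 8 → ℝ) →L[ℝ] (Fin 6 → ℝ) := funLeftCLM ![2, 3, 4, 5, 6, 7]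

theorem thetaOf_eq (Ξ : (Fin 6 → ℝ) → ℝ) :
    ThetaOf Ξ = (fun p => ContinuousLinearMap.proj (R := ℝ) (φ := fun _ : Fin 8 => ℝ) 0 p *
      ContinuousLinearMap.proj (R := ℝ) (φ := fun _ : Fin 8 => ℝ) 5 p) + Ξ ∘ xiCoords :=
  rfl

theorem fderiv_fderiv_thetaOf_apply {Ξ : (Fin 6 → ℝ) → ℝ} (hΞ : ContDiff ℝ 2 Ξ)
    (p v w : Fin 8 → ℝ) :
    fderiv ℝ (fderiv ℝ (ThetaOf Ξ)) p v w
      = v 0 * w 5 + v 5 * w 0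
        + fderiv ℝ (fderiv ℝ Ξ) (xiCoords p) (xiCoords v) (xiCoords w) := by
  rw [thetaOf_eq, fderiv_fderiv_add_apply (by fun_prop) (hΞ.comp xiCoords.contDiff).contDiffAt,
    fderiv_fderiv_mul_clm_apply, fderiv_fderiv_comp_clm_apply hΞ]
  rfl

theorem tedLHS_eq (Θ : (Fin 8 → ℝ) → ℝ) (p : Fin 8 → ℝ) :
    tedLHS Θ p
      = (pd 0 (pd 5 Θ) p - pd 1 (pd 4 Θ) p) * (pd 2 (pd 7 Θ) p - pd 3 (pd 6 Θ) p)
        + (pd 1 (pd 6 Θ) p - pd 2 (pd 5 Θ) p) * (pd 0 (pd 7 Θ) p - pd 3 (pd 4 Θ) p)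
        + (pd 2 (pd 4 Θ) p - pd 0 (pd 6 Θ) p) * (pd 1 (pd 7 Θ) p - pd 3 (pd 5 Θ) p) :=
  rfl

theorem tedLHS_thetaOf {Ξ : (Fin 6 → ℝ) → ℝ} (hΞ : ContDiff ℝ 2 Ξ) (p : Fin 8 → ℝ) :
    tedLHS (ThetaOf Ξ) p
      = pd 0 (pd 5 Ξ) (xiCoords p) - pd 1 (pd 4 Ξ) (xiCoords p)
        + pd 0 (pd 3 Ξ) (xiCoords p) * pd 1 (pd 2 Ξ) (xiCoords p)
        - pd 0 (pd 2 Ξ) (xiCoords p) * pd 1 (pd 3 Ξ) (xiCoords p) := by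
  have hΘ : ContDiff ℝ 2 (ThetaOf Ξ) := by unfold ThetaOf; fun_prop
  have hσ : Function.Injective ![(2 : Fin 8), 3, 4, 5, 6, 7] := by decide
  have x0 : xiCoords (Pi.single 0 1) = 0 := funLeftCLM_single_of_forall_ne (by decide)
  have x1 : xiCoords (Pi.single 1 1) = 0 := funLeftCLM_single_of_forall_ne (by decide)
  have x2 : xiCoords (Pi.single 2 1) = Pi.single 0 1 := funLeftCLM_single_of_injective hσ 0
  have x3 : xiCoords (Pi.single 3 1) = Pi.single 1 1 := funLeftCLM_single_of_injective hσ 1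
  have x4 : xiCoords (Pi.single 4 1) = Pi.single 2 1 := funLeftCLM_single_of_injective hσ 2
  have x5 : xiCoords (Pi.single 5 1) = Pi.single 3 1 := funLeftCLM_single_of_injective hσ 3
  have x6 : xiCoords (Pi.single 6 1) = Pi.single 4 1 := funLeftCLM_single_of_injective hσ 4
  have x7 : xiCoords (Pi.single 7 1) = Pi.single 5 1 := funLeftCLM_single_of_injective hσ 5
  simp only [tedLHS_eq, pd_pd_eq_fderiv_fderiv hΘ.contDiffAt,
    pd_pd_eq_fderiv_fderiv hΞ.contDiffAt, fderiv_fderiv_thetaOf_apply hΞ,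
    x0, x1, x2, x3, x4, x5, x6, x7, map_zero, zero_apply]
  simp +decide only [Pi.single_apply, if_true, if_false]
  ring

/-- reduction to the 6-dimensional second heavenly equation:
`Θ = x¹y² + Ξ(x³,x⁴,y¹,y²,y³,y⁴)` satisfies the 4+4-dimensional TED equation at a point
iff `Ξ` satisfies `Ξ_{x³y⁴} − Ξ_{x⁴y³} = Ξ_{x³y¹} Ξ_{x⁴y²} − Ξ_{x³y²} Ξ_{x⁴y¹}` at the
corresponding point. -/
theorem stmt13 (Ξ : (Fin 6 → ℝ) → ℝ) (hΞ : ContDiff ℝ (⊤ : ℕ∞) Ξ) :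
    ∀ p : Fin 8 → ℝ,
      (tedLHS (ThetaOf Ξ) p = 0 ↔
        (pd 0 (pd 5 Ξ) (fun j => p (![2, 3, 4, 5, 6, 7] j)) -
            pd 1 (pd 4 Ξ) (fun j => p (![2, 3, 4, 5, 6, 7] j)) =
          pd 0 (pd 2 Ξ) (fun j => p (![2, 3, 4, 5, 6, 7] j)) *
              pd 1 (pd 3 Ξ) (fun j => p (![2, 3, 4, 5, 6, 7] j)) -
            pd 0 (pd 3 Ξ) (fun j => p (![2, 3, 4, 5, 6, 7] j)) *
              pd 1 (pd 2 Ξ) (fun j => p (![2, 3, 4, 5, 6, 7] j)))) := by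
  intro p
  have hq : (fun j => p (![2, 3, 4, 5, 6, 7] j)) = xiCoords p := rfl
  rw [hq, tedLHS_thetaOf (hΞ.of_le (by norm_cast))]
  constructor <;> intro h <;> linear_combination h
end
end

section
/- (Reduction to the dispersionless Hirota equation.) Let a : ℝ → ℝ and Ξ : ℝ³ → ℝ be smooth, let λ₁,…,λ₄ ∈ ℝ, and define Θ(x¹,x²,x³,x⁴) = a(x¹) Ξ(x²,x³,x⁴). At every point where a(x¹) a'(x¹) ≠ 0, Θ satisfies the symmetric general heavenly equation (λ₁−λ₂)(λ₃−λ₄)Θ_{x¹x²}Θ_{x³x⁴} + (λ₂−λ₃)(λ₁−λ₄)Θ_{x²x³}Θ_{x¹x⁴} + (λ₃−λ₁)(λ₂−λ₄)Θ_{x³x¹}Θ_{x²x⁴} = 0 if and only if Ξ satisfies the dispersionless Hirota equation (λ₁−λ₂)(λ₃−λ₄)Ξ_{x²}Ξ_{x³x⁴} + (λ₂−λ₃)(λ₁−λ₄)Ξ_{x⁴}Ξ_{x²x³} + (λ₃−λ₁)(λ₂−λ₄)Ξ_{x³}Ξ_{x²x⁴} = 0 at the corresponding point. -/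
/-!
For `Θ = a(x¹) Ξ(x², x³, x⁴)` the product rule gives `Θ_{x¹} = a' Ξ` and
`Θ_{x^{j+1}} = a Ξ_{x^j}`. In each product of the heavenly equation exactly one of the two
second derivatives involves `x¹`, so each term equals `a(x¹) a'(x¹)` times the corresponding
term of the Hirota equation, and the two equations are equivalent wherever `a a' ≠ 0`.
-/

noncomputable section

section

variable {n : ℕ} {b : ℝ → ℝ} {F : (Fin n → ℝ) → ℝ}

theorem contDiff_pd {m k : WithTop ℕ∞} (i : Fin n) (hF : ContDiff ℝ k F) (hmk : m + 1 ≤ k) :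
    ContDiff ℝ m (pd i F) :=
  (hF.fderiv_right hmk).clm_apply contDiff_const

theorem pd_mul_comp_tail {v : Fin (n + 1) → ℝ} (hb : DifferentiableAt ℝ b (v 0))
    (hF : DifferentiableAt ℝ F (fun j => v j.succ)) (i : Fin (n + 1)) :
    pd i (fun w => b (w 0) * F (fun j => w j.succ)) v =
      b (v 0) * fderiv ℝ F (fun j => v j.succ)
          (fun j => (Pi.single i 1 : Fin (n + 1) → ℝ) j.succ) +
        deriv b (v 0) * (Pi.single i 1 : Fin (n + 1) → ℝ) 0 * F (fun j => v j.succ) := by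
  let tail : (Fin (n + 1) → ℝ) →L[ℝ] (Fin n → ℝ) :=
    ContinuousLinearMap.pi fun j => ContinuousLinearMap.proj j.succ
  have hhead : HasFDerivAt (fun w : Fin (n + 1) → ℝ => b (w 0))
      (deriv b (v 0) • ContinuousLinearMap.proj (R := ℝ) (φ := fun _ => ℝ) 0) v :=
    hb.hasDerivAt.comp_hasFDerivAt v (hasFDerivAt_apply 0 v)
  have htail : HasFDerivAt (fun w : Fin (n + 1) → ℝ => F (fun j => w j.succ))
      ((fderiv ℝ F (tail v)).comp tail) v :=
    hF.hasFDerivAt.comp v tail.hasFDerivAt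
  simp only [pd, (hhead.fun_mul htail).fderiv]
  simp only [ContinuousLinearMap.coe_pi', ContinuousLinearMap.proj_apply, add_apply, smul_apply,
    ContinuousLinearMap.comp_apply, smul_eq_mul, add_right_inj, tail]
  ring

theorem pd_zero_mul_comp_tail (hb : Differentiable ℝ b) (hF : Differentiable ℝ F) :
    pd 0 (fun w : Fin (n + 1) → ℝ => b (w 0) * F (fun j => w j.succ)) =
      fun w => deriv b (w 0) * F (fun j => w j.succ) := by
  ext v
  have hsingle : (fun j : Fin n => (Pi.single 0 1 : Fin (n + 1) → ℝ) j.succ) = 0 := by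
    ext j
    simp [Fin.succ_ne_zero]
  rw [pd_mul_comp_tail (hb _) (hF _), hsingle]
  simp

theorem pd_succ_mul_comp_tail (hb : Differentiable ℝ b) (hF : Differentiable ℝ F) (i : Fin n) :
    pd i.succ (fun w : Fin (n + 1) → ℝ => b (w 0) * F (fun j => w j.succ)) =
      fun w => b (w 0) * pd i F (fun j => w j.succ) := by
  ext v
  have hsingle :
      (fun j : Fin n => (Pi.single i.succ 1 : Fin (n + 1) → ℝ) j.succ) = Pi.single i 1 := by
    ext j
    simp [Pi.single_apply]
  rw [pd_mul_comp_tail (hb _) (hF _), hsingle]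
  simp [pd, (Fin.succ_ne_zero i).symm]

end

/-- reduction to the dispersionless Hirota equation: with
`Θ(x¹,x²,x³,x⁴) = a(x¹) Ξ(x²,x³,x⁴)`, at every point where `a(x¹) a'(x¹) ≠ 0`, `Θ`
satisfies the symmetric general heavenly equation iff `Ξ` satisfies the dispersionless
Hirota equation at the corresponding point. -/
theorem stmt18 (a : ℝ → ℝ) (Ξ : (Fin 3 → ℝ) → ℝ) (ha : ContDiff ℝ (⊤ : ℕ∞) a)
    (hΞ : ContDiff ℝ (⊤ : ℕ∞) Ξ) (lam : Fin 4 → ℝ) :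
    ∀ v : Fin 4 → ℝ, a (v 0) * deriv a (v 0) ≠ 0 →
      (((lam 0 - lam 1) * (lam 2 - lam 3) *
            (pd 0 (pd 1 (fun v' => a (v' 0) * Ξ (fun j : Fin 3 => v' j.succ))) v *
              pd 2 (pd 3 (fun v' => a (v' 0) * Ξ (fun j : Fin 3 => v' j.succ))) v) +
          (lam 1 - lam 2) * (lam 0 - lam 3) *
            (pd 1 (pd 2 (fun v' => a (v' 0) * Ξ (fun j : Fin 3 => v' j.succ))) v *
              pd 0 (pd 3 (fun v' => a (v' 0) * Ξ (fun j : Fin 3 => v' j.succ))) v) +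
          (lam 2 - lam 0) * (lam 1 - lam 3) *
            (pd 2 (pd 0 (fun v' => a (v' 0) * Ξ (fun j : Fin 3 => v' j.succ))) v *
              pd 1 (pd 3 (fun v' => a (v' 0) * Ξ (fun j : Fin 3 => v' j.succ))) v) = 0) ↔
        ((lam 0 - lam 1) * (lam 2 - lam 3) *
            (pd 0 Ξ (fun j : Fin 3 => v j.succ) * pd 1 (pd 2 Ξ) (fun j : Fin 3 => v j.succ)) +
          (lam 1 - lam 2) * (lam 0 - lam 3) *
            (pd 2 Ξ (fun j : Fin 3 => v j.succ) * pd 0 (pd 1 Ξ) (fun j : Fin 3 => v j.succ)) +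
          (lam 2 - lam 0) * (lam 1 - lam 3) *
            (pd 1 Ξ (fun j : Fin 3 => v j.succ) * pd 0 (pd 2 Ξ) (fun j : Fin 3 => v j.succ)) =
          0)) := by
  intro v hv
  have ha₁ : Differentiable ℝ a := ha.differentiable (by simp)
  have ha₂ : Differentiable ℝ (deriv a) :=
    (contDiff_infty_iff_deriv.mp ha).2.differentiable (by simp)
  have hΞ₁ : Differentiable ℝ Ξ := hΞ.differentiable (by simp)
  have hΞ₂ (i : Fin 3) : Differentiable ℝ (pd i Ξ) :=
    (contDiff_pd (m := 1) i hΞ (WithTop.coe_le_coe.mpr le_top)).differentiable one_ne_zero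
  -- `Fin.succ 0` is `1 : Fin 4` only up to unfolding, hence the `show`s.
  rw [pd_zero_mul_comp_tail ha₁ hΞ₁,
    (show pd 1 _ = _ from pd_succ_mul_comp_tail ha₁ hΞ₁ 0),
    (show pd 2 _ = _ from pd_succ_mul_comp_tail ha₁ hΞ₁ 1),
    (show pd 3 _ = _ from pd_succ_mul_comp_tail ha₁ hΞ₁ 2),
    pd_zero_mul_comp_tail ha₁ (hΞ₂ 0), pd_zero_mul_comp_tail ha₁ (hΞ₂ 2),
    (show pd 1 _ = _ from pd_succ_mul_comp_tail ha₁ (hΞ₂ 2) 0),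
    (show pd 2 _ = _ from pd_succ_mul_comp_tail ha₁ (hΞ₂ 2) 1),
    (show pd 1 _ = _ from pd_succ_mul_comp_tail ha₁ (hΞ₂ 1) 0),
    (show pd 2 _ = _ from pd_succ_mul_comp_tail ha₂ hΞ₁ 1)]
  conv_rhs => rw [← mul_right_inj' hv, mul_zero]
  constructor <;> intro h <;> linear_combination h
end
end

section
/- (Decomposition of the discrete general heavenly equation.) Let λ₁,λ₂,λ₃,λ₄ ∈ ℝ be pairwise distinct, and let τ, τ₁, τ₂, τ₃, τ₄, τ₁₂, τ₁₃, τ₁₄, τ₂₃, τ₂₄, τ₃₄ ∈ ℝ with τ₁, τ₂, τ₃, τ₄ all nonzero. Suppose the four Hirota equations hold: (λ₁−λ₂)τ₃τ₁₂ + (λ₂−λ₃)τ₁τ₂₃ + (λ₃−λ₁)τ₂τ₁₃ = 0; (λ₁−λ₂)τ₄τ₁₂ + (λ₂−λ₄)τ₁τ₂₄ + (λ₄−λ₁)τ₂τ₁₄ = 0; (λ₁−λ₃)τ₄τ₁₃ + (λ₃−λ₄)τ₁τ₃₄ + (λ₄−λ₁)τ₃τ₁₄ = 0; (λ₂−λ₃)τ₄τ₂₃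 + (λ₃−λ₄)τ₂τ₃₄ + (λ₄−λ₂)τ₃τ₂₄ = 0. Then both (λ₁−λ₂)(λ₃−λ₄)τ₁₂τ₃₄ + (λ₂−λ₃)(λ₁−λ₄)τ₂₃τ₁₄ + (λ₃−λ₁)(λ₂−λ₄)τ₁₃τ₂₄ = 0 and (λ₁−λ₂)(λ₃−λ₄)(τ₃τ₄τ₁₂ + τ₁τ₂τ₃₄) + (λ₂−λ₃)(λ₁−λ₄)(τ₁τ₄τ₂₃ + τ₂τ₃τ₁₄) + (λ₃−λ₁)(λ₂−λ₄)(τ₂τ₄τ₁₃ + τ₁τ₃τ₂₄) = 0 hold; consequently the discrete general heavenly equation (λ₁−λ₂)(λ₃−λ₄)(ττ₁₂−τ₁τ₂)(ττ₃₄−τ₃τ₄) + (λ₂−λ₃)(λ₁−λ₄)(ττ₂₃−τ₂τ₃)(ττ₁₄−τ₁τ₄) + (λ₃−λ₁)(λ₂−λ₄)(ττ₁₃−τ₁τ₃)(ττ₂₄−τ₂τ₄) = 0 holds. -/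
/-- decomposition of the discrete general heavenly equation: if the four
3-dimensional Hirota equations in the index triples `(1,2,3)`, `(1,2,4)`, `(1,3,4)`,
`(2,3,4)` hold (with `λ₁,…,λ₄` pairwise distinct and `τ₁,…,τ₄` nonzero), then both halves
of the discrete general heavenly equation hold, and consequently the discrete general
heavenly equation itself holds. -/
theorem stmt19 (l1 l2 l3 l4 : ℝ)
    (h12 : l1 ≠ l2) (h13 : l1 ≠ l3) (h14 : l1 ≠ l4)
    (h23 : l2 ≠ l3) (h24 : l2 ≠ l4) (h34 : l3 ≠ l4)
    (t t1 t2 t3 t4 t12 t13 t14 t23 t24 t34 : ℝ)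
    (ht1 : t1 ≠ 0) (ht2 : t2 ≠ 0) (ht3 : t3 ≠ 0) (ht4 : t4 ≠ 0)
    (H123 : (l1 - l2) * t3 * t12 + (l2 - l3) * t1 * t23 + (l3 - l1) * t2 * t13 = 0)
    (H124 : (l1 - l2) * t4 * t12 + (l2 - l4) * t1 * t24 + (l4 - l1) * t2 * t14 = 0)
    (H134 : (l1 - l3) * t4 * t13 + (l3 - l4) * t1 * t34 + (l4 - l1) * t3 * t14 = 0)
    (H234 : (l2 - l3) * t4 * t23 + (l3 - l4) * t2 * t34 + (l4 - l2) * t3 * t24 = 0) :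
    ((l1 - l2) * (l3 - l4) * (t12 * t34) + (l2 - l3) * (l1 - l4) * (t23 * t14) +
        (l3 - l1) * (l2 - l4) * (t13 * t24) = 0) ∧
    ((l1 - l2) * (l3 - l4) * (t3 * t4 * t12 + t1 * t2 * t34) +
        (l2 - l3) * (l1 - l4) * (t1 * t4 * t23 + t2 * t3 * t14) +
        (l3 - l1) * (l2 - l4) * (t2 * t4 * t13 + t1 * t3 * t24) = 0) ∧
    ((l1 - l2) * (l3 - l4) * ((t * t12 - t1 * t2) * (t * t34 - t3 * t4)) +
        (l2 - l3) * (l1 - l4) * ((t * t23 - t2 * t3) * (t * t14 - t1 * t4)) +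
        (l3 - l1) * (l2 - l4) * ((t * t13 - t1 * t3) * (t * t24 - t2 * t4)) = 0) := by
  have hA : (l1 - l2) * (l3 - l4) * (t12 * t34) + (l2 - l3) * (l1 - l4) * (t23 * t14) +
      (l3 - l1) * (l2 - l4) * (t13 * t24) = 0 := by
    have h : t1 * t3 * ((l1 - l2) * (l3 - l4) * (t12 * t34) +
        (l2 - l3) * (l1 - l4) * (t23 * t14) + (l3 - l1) * (l2 - l4) * (t13 * t24)) = 0 := by
      linear_combination ((l3 - l4) * t1 * t34 + (l1 - l3) * t13 * t4) * H123
        - (l1 - l3) * t13 * t3 * H124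
        - ((l2 - l3) * t1 * t23 + (l3 - l1) * t2 * t13) * H134
    rcases mul_eq_zero.mp h with h' | h'
    · exact absurd (mul_eq_zero.mp h') (by simp [ht1, ht3])
    · exact h'
  have hB : (l1 - l2) * (l3 - l4) * (t3 * t4 * t12 + t1 * t2 * t34) +
      (l2 - l3) * (l1 - l4) * (t1 * t4 * t23 + t2 * t3 * t14) +
      (l3 - l1) * (l2 - l4) * (t2 * t4 * t13 + t1 * t3 * t24) = 0 := by
    linear_combination (l1 - l4) * t4 * H123 - (l1 - l3) * t3 * H124 + (l1 - l2) * t2 * H134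
  refine ⟨hA, hB, ?_⟩
  linear_combination t ^ 2 * hA - t * hB
end
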